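/- arXiv:1705.05827 — 3 statements merged into one kernel-verified Lean document; each statement's English description precedes it below -/
import Mathlib

section
/- In 2S(G;L,R), if W(L) and W(R) are subgroups of G, then two vertices g and h are weakly connected if and only if they are strongly connected. -/
/-!
Every arc `g → l⁻¹ g r` can be traversed backwards. Since `W(L)` and `W(R)` are groups, `l⁻¹` and
`r⁻¹` are words in `L` and `R`, and `1 = l · l⁻¹`, `1 = r · r⁻¹` are words too, so `l⁻¹` and `r⁻¹`
can be padded to words of one common length `n`. A walk of length `n` applying letter `i` of each
word at step `i` then leads from `l⁻¹ g r` back to `g`. With every arc reversible, weak and strong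
connectivity both coincide with the existence of a directed path.
-/

open Relation

/-- `w` is a product of a list of `n` elements of `S`. -/
def IsWord {G : Type*} [Group G] (S : Set G) (n : ℕ) (w : G) : Prop :=
  ∃ l : List G, l.length = n ∧ (∀ x ∈ l, x ∈ S) ∧ l.prod = w

/-- The set of all positive-length words in `S`. -/
def WordSet {G : Type*} [Group G] (S : Set G) : Set G :=
  {w | ∃ n : ℕ, 0 < n ∧ IsWord S n w}

/-- Arc of the two-sided group digraph `2S(G;L,R)`. -/
def Arc {G : Type*} [Group G] (L R : Set G) (g h : G) : Prop :=
  ∃ l ∈ L, ∃ r ∈ R, h = l⁻¹ * g * r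

/-- Existence of a directed path (possibly of length 0). -/
def DPath {G : Type*} [Group G] (L R : Set G) : G → G → Prop :=
  ReflTransGen (Arc L R)

/-- Weak connectivity: path ignoring directions. -/
def WeakConn {G : Type*} [Group G] (L R : Set G) : G → G → Prop :=
  ReflTransGen (fun g h => Arc L R g h ∨ Arc L R h g)

/-- Strong connectivity of two vertices. -/
def StrongConn {G : Type*} [Group G] (L R : Set G) (g h : G) : Prop :=
  DPath L R g h ∧ DPath L R h g

namespace Relation

variable {α : Type*} {r : α → α → Prop}

theorem reflTransGen_symm_of_swap_le (hr : ∀ a b, r a b → ReflTransGen r b a) {a b : α}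
    (hab : ReflTransGen r a b) : ReflTransGen r b a := by
  induction hab with
  | refl => rfl
  | tail _ hbc ih => exact (hr _ _ hbc).trans ih

theorem reflTransGen_symmGen_iff (hr : ∀ a b, r a b → ReflTransGen r b a) {a b : α} :
    ReflTransGen (SymmGen r) a b ↔ ReflTransGen r a b ∧ ReflTransGen r b a := by
  refine ⟨fun hab => ?_, fun hab => ReflTransGen.mono (fun _ _ => Or.inl) a b hab.1⟩
  have hle : SymmGen r ≤ ReflTransGen r := fun x y hxy => hxy.elim .single (hr y x)
  have hab' := reflTransGen_closed hle a b hab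
  exact ⟨hab', reflTransGen_symm_of_swap_le hr hab'⟩

end Relation

section Words

variable {G : Type*} [Group G] {S : Set G}

theorem isWord_zero_one : IsWord S 0 1 := ⟨[], rfl, by simp, rfl⟩

theorem isWord_one_of_mem {x : G} (hx : x ∈ S) : IsWord S 1 x :=
  ⟨[x], rfl, by simpa using hx, by simp⟩

theorem IsWord.mul {m n : ℕ} {a b : G} (ha : IsWord S m a) (hb : IsWord S n b) :
    IsWord S (m + n) (a * b) := by
  obtain ⟨u, rfl, hu, rfl⟩ := ha
  obtain ⟨v, rfl, hv, rfl⟩ := hb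
  exact ⟨u ++ v, List.length_append, by simpa using fun x hx => hx.elim (hu x) (hv x),
    List.prod_append⟩

theorem IsWord.pow {n : ℕ} {a : G} (ha : IsWord S n a) (k : ℕ) : IsWord S (k * n) (a ^ k) := by
  induction k with
  | zero => simpa using isWord_zero_one
  | succ k ih => simpa [pow_succ, Nat.succ_mul] using ih.mul ha

theorem isWord_succ_iff {n : ℕ} {w : G} :
    IsWord S (n + 1) w ↔ ∃ x ∈ S, ∃ w', IsWord S n w' ∧ w = x * w' := by
  constructor
  · rintro ⟨_ | ⟨x, u⟩, hlen, hu, rfl⟩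
    · simp at hlen
    · exact ⟨x, hu x (by simp), u.prod, ⟨u, by simpa using hlen, fun y hy => hu y (by simp [hy]),
        rfl⟩, List.prod_cons⟩
  · rintro ⟨x, hx, w', hw', rfl⟩
    simpa [add_comm] using (isWord_one_of_mem hx).mul hw'

theorem exists_isWord_inv_of_mem (hS : ∃ H : Subgroup G, WordSet S = (H : Set G)) {x : G}
    (hx : x ∈ S) : ∃ m, ∀ k, IsWord S (m + k * (m + 1)) x⁻¹ := by
  obtain ⟨H, hH⟩ := hS
  have hxH : x ∈ (H : Set G) := hH ▸ ⟨1, one_pos, isWord_one_of_mem hx⟩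
  obtain ⟨m, -, hm⟩ : x⁻¹ ∈ WordSet S := hH ▸ H.inv_mem hxH
  have hone : IsWord S (m + 1) 1 := by
    simpa [add_comm] using (isWord_one_of_mem hx).mul hm
  exact ⟨m, fun k => by simpa using hm.mul (hone.pow k)⟩

end Words

section Digraph

variable {G : Type*} [Group G] {L R : Set G}

theorem dPath_of_isWord {n : ℕ} {a b : G} (ha : IsWord L n a) (hb : IsWord R n b) (g : G) :
    DPath L R g (a⁻¹ * g * b) := by
  induction n generalizing a b g with
  | zero =>
    obtain ⟨u, hu, -, rfl⟩ := ha
    obtain ⟨v, hv, -, rfl⟩ := hb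
    rw [List.length_eq_zero_iff.mp hu, List.length_eq_zero_iff.mp hv]
    simp only [List.prod_nil, inv_one, one_mul, mul_one]
    exact ReflTransGen.refl
  | succ n ih =>
    obtain ⟨l, hl, a', ha', rfl⟩ := isWord_succ_iff.mp ha
    obtain ⟨r, hr, b', hb', rfl⟩ := isWord_succ_iff.mp hb
    have hpath := ReflTransGen.head ⟨l, hl, r, hr, rfl⟩ (ih ha' hb' (l⁻¹ * g * r))
    simpa [DPath, mul_assoc] using hpath

theorem Arc.dPath_reverse (hWL : ∃ H : Subgroup G, WordSet L = (H : Set G))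
    (hWR : ∃ H : Subgroup G, WordSet R = (H : Set G)) {g h : G} (harc : Arc L R g h) :
    DPath L R h g := by
  obtain ⟨l, hl, r, hr, rfl⟩ := harc
  obtain ⟨m, hm⟩ := exists_isWord_inv_of_mem hWL hl
  obtain ⟨n, hn⟩ := exists_isWord_inv_of_mem hWR hr
  have hlen : n + m * (n + 1) = m + n * (m + 1) := by ring
  have hpath := dPath_of_isWord (hm n) (hlen ▸ hn m) (l⁻¹ * g * r)
  simpa [mul_assoc] using hpath

end Digraph

theorem stmt_5_general {G : Type*} [Group G] (L R : Set G)
    (hWL : ∃ H : Subgroup G, WordSet L = (H : Set G))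
    (hWR : ∃ H : Subgroup G, WordSet R = (H : Set G)) :
    ∀ g h : G, WeakConn L R g h ↔ StrongConn L R g h :=
  fun _ _ => reflTransGen_symmGen_iff fun _ _ harc => harc.dPath_reverse hWL hWR

theorem stmt_5 {G : Type*} [Group G] (L R : Set G) (hL : L.Nonempty) (hR : R.Nonempty)
    (hWL : ∃ H : Subgroup G, WordSet L = (H : Set G))
    (hWR : ∃ H : Subgroup G, WordSet R = (H : Set G)) :
    ∀ g h : G, WeakConn L R g h ↔ StrongConn L R g h :=
  stmt_5_general L R hWL hWR
end

section
/- The two-sided group digraph 2S(G;L,R) is weakly connected if and only if G = W(L∪L⁻¹)·W(R∪R⁻¹) and there exists some element of L ∪ L⁻¹ or of R ∪ R⁻¹ that is weakly connected to the identity e. -/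
open Relation Pointwise

/-!
Let `H ≤ G × G` be the subgroup generated by `L ×ˢ R`. Weak components of `2S(G;L,R)` are the
orbits of `g ↦ p⁻¹ * g * q` for `(p, q) ∈ H`, and the projections of `H` are `⟨L⟩ = W(L ∪ L⁻¹)`
and `⟨R⟩ = W(R ∪ R⁻¹)`; so connectivity forces `G = ⟨L⟩⟨R⟩`.

Conversely, for `(p, q) ∈ H` and `c ∈ L ∪ L⁻¹` the commutator `⁅p, c⁆` lifts to `(⁅p, c⁆, 1) ∈ H`,
so `p * c * p⁻¹` lies in the component of `c`. Writing `g = p⁻¹ * q`, it follows that `c * g` is in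
the component of `1` whenever `c` and `g` are; hence that component is stable under left
multiplication by `⟨L⟩` as soon as it meets `L ∪ L⁻¹`, and one arc moves an element of `R ∪ R⁻¹`
onto `L ∪ L⁻¹`. The isomorphism `g ↦ g⁻¹` from `2S(G;L,R)` to `2S(G;R,L)` gives the same for
`⟨R⟩`, and every `g = u * v` with `u ∈ ⟨L⟩`, `v ∈ ⟨R⟩` is then connected to `1`.
-/

open scoped commutatorElement

section TwoSidedGroupDigraph

variable {G : Type*} [Group G] {L R : Set G}

theorem wordSet_union_inv {S : Set G} (hS : S.Nonempty) :
    WordSet (S ∪ S⁻¹) = Subgroup.closure S := by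
  ext w
  rw [SetLike.mem_coe, ← Subgroup.mem_toSubmonoid, Subgroup.closure_toSubmonoid]
  constructor
  · rintro ⟨n, -, l, -, hl, rfl⟩
    exact Submonoid.list_prod_mem _ fun x hx => Submonoid.subset_closure (hl x hx)
  · intro hw
    obtain ⟨l, hl, rfl⟩ := Submonoid.exists_list_of_mem_closure hw
    cases l with
    | nil =>
      obtain ⟨s, hs⟩ := hS
      exact ⟨2, two_pos, [s, s⁻¹], rfl, by simp [hs], by simp⟩
    | cons a l => exact ⟨_, Nat.succ_pos _, a :: l, rfl, hl, rfl⟩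

theorem inv_mem_union_inv {S : Set G} {c : G} (hc : c ∈ S ∪ S⁻¹) : c⁻¹ ∈ S ∪ S⁻¹ := by
  rw [Set.mem_union, Set.mem_inv, inv_inv]
  exact hc.symm

theorem WeakConn.refl (g : G) : WeakConn L R g g := ReflTransGen.refl

theorem WeakConn.trans {g h k : G} (hgh : WeakConn L R g h) (hhk : WeakConn L R h k) :
    WeakConn L R g k :=
  ReflTransGen.trans hgh hhk

theorem WeakConn.symm {g h : G} (hgh : WeakConn L R g h) : WeakConn L R h g := by
  induction hgh with
  | refl => exact .refl _
  | tail _ hstep ih => exact ReflTransGen.head hstep.symm ih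

theorem WeakConn.inv_swap {g h : G} (hgh : WeakConn L R g h) : WeakConn R L g⁻¹ h⁻¹ := by
  have arc_inv : ∀ {a b : G}, Arc L R a b → Arc R L a⁻¹ b⁻¹ := by
    rintro a b ⟨l, hl, r, hr, rfl⟩
    exact ⟨r, hr, l, hl, by group⟩
  induction hgh with
  | refl => exact .refl _
  | tail _ hstep ih => exact ReflTransGen.tail ih (hstep.imp arc_inv arc_inv)

def arcGroup (L R : Set G) : Subgroup (G × G) := Subgroup.closure (L ×ˢ R)

theorem mk_mem_arcGroup {l r : G} (hl : l ∈ L) (hr : r ∈ R) : (l, r) ∈ arcGroup L R :=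
  Subgroup.subset_closure (Set.mk_mem_prod hl hr)

theorem mem_closure_of_mem_arcGroup {a : G × G} (ha : a ∈ arcGroup L R) :
    a.1 ∈ Subgroup.closure L ∧ a.2 ∈ Subgroup.closure R := by
  have : arcGroup L R ≤ (Subgroup.closure L).prod (Subgroup.closure R) :=
    Subgroup.closure_le _ |>.mpr fun _ ⟨hl, hr⟩ =>
      ⟨Subgroup.subset_closure hl, Subgroup.subset_closure hr⟩
  exact Subgroup.mem_prod.mp (this ha)

theorem weakConn_inv_mul_mul {a : G × G} (ha : a ∈ arcGroup L R) (g : G) :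
    WeakConn L R g (a.1⁻¹ * g * a.2) := by
  induction ha using Subgroup.closure_induction generalizing g with
  | mem a ha => exact ReflTransGen.single (Or.inl ⟨a.1, ha.1, a.2, ha.2, rfl⟩)
  | one => simpa using WeakConn.refl g
  | mul a b _ _ iha ihb =>
    convert (iha g).trans (ihb _) using 1
    simp [mul_assoc]
  | inv a _ iha =>
    convert (iha (a.1 * g * a.2⁻¹)).symm using 1 <;> simp [mul_assoc]

theorem weakConn_iff_exists_mem_arcGroup {g h : G} :
    WeakConn L R g h ↔ ∃ a ∈ arcGroup L R, h = a.1⁻¹ * g * a.2 := by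
  refine ⟨fun hgh => ?_, fun ⟨a, ha, hh⟩ => hh ▸ weakConn_inv_mul_mul ha g⟩
  induction hgh with
  | refl => exact ⟨1, one_mem _, by simp⟩
  | @tail _ k _ hstep ih =>
    obtain ⟨a, ha, rfl⟩ := ih
    rcases hstep with ⟨l, hl, r, hr, rfl⟩ | ⟨l, hl, r, hr, hstep⟩
    · exact ⟨a * (l, r), mul_mem ha (mk_mem_arcGroup hl hr), by simp [mul_assoc]⟩
    · refine ⟨a * (l, r)⁻¹, mul_mem ha (inv_mem (mk_mem_arcGroup hl hr)), ?_⟩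
      have hk : k = l * (a.1⁻¹ * g * a.2) * r⁻¹ := by rw [hstep]; group
      simp [hk, mul_assoc]

theorem commutator_mem_arcGroup {a : G × G} {c : G} (ha : a ∈ arcGroup L R) (hc : c ∈ L ∪ L⁻¹) :
    (⁅a.1, c⁆, (1 : G)) ∈ arcGroup L R := by
  induction ha using Subgroup.closure_induction with
  | mem a ha =>
    -- the lift is `⁅a, (c, s)⁆` with `s = a.2 ^ (±1)`, whose second coordinate vanishes
    obtain ⟨s, hs, hcomm⟩ : ∃ s, (c, s) ∈ arcGroup L R ∧ Commute a.2 s := by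
      rcases hc with hc | hc
      · exact ⟨a.2, mk_mem_arcGroup hc ha.2, Commute.refl _⟩
      · exact ⟨a.2⁻¹, by simpa using inv_mem (mk_mem_arcGroup (L := L) hc ha.2),
          (Commute.refl _).inv_right⟩
    have key : (⁅a.1, c⁆, (1 : G)) = a * (c, s) * a⁻¹ * (c, s)⁻¹ := by
      ext
      · simp [commutatorElement_def]
      · simp [hcomm.eq]
    have ha' : a ∈ arcGroup L R := Subgroup.subset_closure ha
    rw [key]
    exact mul_mem (mul_mem (mul_mem ha' hs) (inv_mem ha')) (inv_mem hs)
  | one =>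
    rw [Prod.fst_one, commutatorElement_one_left, Prod.mk_one_one]
    exact one_mem _
  | mul a b ha _ iha ihb =>
    have key : (⁅(a * b).1, c⁆, (1 : G)) = a * (⁅b.1, c⁆, 1) * a⁻¹ * (⁅a.1, c⁆, 1) := by
      ext
      · simp [commutatorElement_def]; group
      · simp
    rw [key]
    exact mul_mem (mul_mem (mul_mem ha ihb) (inv_mem ha)) iha
  | inv a ha iha =>
    have key : (⁅(a⁻¹).1, c⁆, (1 : G)) = a⁻¹ * (⁅a.1, c⁆, 1)⁻¹ * a := by
      ext
      · simp [commutatorElement_def]; group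
      · simp
    rw [key]
    exact mul_mem (mul_mem (inv_mem ha) (inv_mem iha)) ha

theorem weakConn_conj {a : G × G} {c : G} (ha : a ∈ arcGroup L R) (hc : c ∈ L ∪ L⁻¹) :
    WeakConn L R c (a.1 * c * a.1⁻¹) := by
  convert weakConn_inv_mul_mul (inv_mem (commutator_mem_arcGroup ha hc)) c using 1
  simp [commutatorElement_def]

theorem weakConn_one_mul {c g : G} (hc : c ∈ L ∪ L⁻¹) (hc₁ : WeakConn L R 1 c)
    (hg : WeakConn L R 1 g) : WeakConn L R 1 (c * g) := by
  obtain ⟨a, ha, rfl⟩ := weakConn_iff_exists_mem_arcGroup.mp hg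
  convert (hc₁.trans (weakConn_conj ha hc)).trans (weakConn_inv_mul_mul ha _) using 1
  group

theorem weakConn_one_inv {c : G} (hc : c ∈ L ∪ L⁻¹) (hc₁ : WeakConn L R 1 c) :
    WeakConn L R 1 c⁻¹ := by
  obtain ⟨a, ha, hca⟩ := weakConn_iff_exists_mem_arcGroup.mp hc₁
  have h₁ : WeakConn L R 1 (a.1 * c⁻¹ * a.1⁻¹) := by
    convert weakConn_inv_mul_mul (inv_mem ha) 1 using 1
    simp [hca, mul_assoc]
  exact h₁.trans (weakConn_conj ha (inv_mem_union_inv hc)).symm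

theorem weakConn_one_mul_of_mem_closure (hconn : ∀ c ∈ L ∪ L⁻¹, WeakConn L R 1 c) {u g : G}
    (hu : u ∈ Subgroup.closure L) (hg : WeakConn L R 1 g) : WeakConn L R 1 (u * g) := by
  induction hu using Subgroup.closure_induction_left with
  | one => simpa using hg
  | mul_left c hc v _ ih =>
    rw [mul_assoc]
    exact weakConn_one_mul (Or.inl hc) (hconn c (Or.inl hc)) ih
  | inv_mul_cancel c hc v _ ih =>
    rw [mul_assoc]
    have hc' : c⁻¹ ∈ L ∪ L⁻¹ := inv_mem_union_inv (Or.inl hc)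
    exact weakConn_one_mul hc' (hconn _ hc') ih

theorem forall_weakConn_one (hL : L.Nonempty) (hR : R.Nonempty) {x : G}
    (hx : x ∈ L ∪ L⁻¹ ∪ R ∪ R⁻¹) (hx₁ : WeakConn L R 1 x) :
    ∀ c ∈ L ∪ L⁻¹, WeakConn L R 1 c := by
  obtain ⟨r, hr⟩ := hR
  suffices ∃ l ∈ L, WeakConn L R 1 l by
    obtain ⟨l, hl, hl₁⟩ := this
    have hL₁ : ∀ l' ∈ L, WeakConn L R 1 l' := fun l' hl' => by
      convert hl₁.trans (weakConn_inv_mul_mul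
        (mul_mem (mk_mem_arcGroup hl hr) (inv_mem (mk_mem_arcGroup hl' hr))) l) using 1
      simp
    rintro c (hc | hc)
    · exact hL₁ c hc
    · simpa using weakConn_one_inv (L := L) (R := R) (Or.inl hc) (hL₁ _ hc)
  obtain ⟨l, hl⟩ := hL
  rcases hx with ((hx | hx) | hx) | hx
  · exact ⟨x, hx, hx₁⟩
  · exact ⟨x⁻¹, hx, weakConn_one_inv (Or.inr hx) hx₁⟩
  · refine ⟨l, hl, ?_⟩
    simpa using hx₁.trans (weakConn_inv_mul_mul (inv_mem (mk_mem_arcGroup hl hx)) x)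
  · have hl₁ : WeakConn L R 1 l⁻¹ := by
      simpa using hx₁.trans (weakConn_inv_mul_mul (mk_mem_arcGroup (L := L) (R := R) hl hx) x)
    exact ⟨l, hl, by simpa using weakConn_one_inv (Or.inr (Set.inv_mem_inv.mpr hl)) hl₁⟩

end TwoSidedGroupDigraph

theorem stmt_10 {G : Type*} [Group G] (L R : Set G) (hL : L.Nonempty) (hR : R.Nonempty) :
    (∀ g h : G, WeakConn L R g h) ↔
      (WordSet (L ∪ L⁻¹) * WordSet (R ∪ R⁻¹) = Set.univ ∧
       ∃ x ∈ L ∪ L⁻¹ ∪ R ∪ R⁻¹, WeakConn L R x 1) := by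
  rw [wordSet_union_inv hL, wordSet_union_inv hR]
  constructor
  · intro hconn
    refine ⟨Set.eq_univ_of_forall fun g => ?_,
      hL.imp fun l hl => ⟨Or.inl (Or.inl (Or.inl hl)), hconn l 1⟩⟩
    obtain ⟨a, ha, rfl⟩ := weakConn_iff_exists_mem_arcGroup.mp (hconn 1 g)
    obtain ⟨haL, haR⟩ := mem_closure_of_mem_arcGroup ha
    simpa using Set.mul_mem_mul (inv_mem haL) haR
  · rintro ⟨hcov, x, hx, hx₁⟩
    have hconnL := forall_weakConn_one hL hR hx hx₁.symm
    have hconnR := forall_weakConn_one hR hL (x := x⁻¹)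
      (by simp only [Set.mem_union, Set.mem_inv, inv_inv] at hx ⊢; tauto)
      (by simpa using hx₁.symm.inv_swap)
    suffices ∀ g, WeakConn L R 1 g from fun g h => (this g).symm.trans (this h)
    intro g
    obtain ⟨u, hu, v, hv, rfl⟩ := Set.mem_mul.mp (hcov.symm ▸ Set.mem_univ g)
    refine weakConn_one_mul_of_mem_closure hconnL hu ?_
    simpa using (weakConn_one_mul_of_mem_closure hconnR
      ((Subgroup.closure R).inv_mem hv) (.refl 1)).inv_swap
end

section
/- Suppose W(L) and W(R) are subgroups of G. Then 2S(G;L,R) is strongly connected if and only if G = ⟨L⟩⟨R⟩ and there exist i, j ∈ ℕ with |i − j| = 1 such that e = u·v where u is a word in L⁻¹ of length i and v is a word in R of length j. -/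
open Relation Pointwise

/-!
A directed path of length `n` from `g` to `h` amounts to `h = u * g * v` with `u ∈ L⁻¹ ^ n` and
`v ∈ R ^ n`. Paths from `1` therefore give `⟨L⟩ * ⟨R⟩ = G`, and a path from some `r ∈ R` to `1`
gives `1 = u * (r * v)` with word lengths `n` and `n + 1`. Conversely, write `g = x * y` and
`h = x' * y'` with `x, x' ∈ ⟨L⟩` and `y, y' ∈ ⟨R⟩`: then
`h = (x' * u₀ ^ α * x⁻¹) * g * (y⁻¹ * v₀ ^ α * y')`. Since `W(L)` and `W(R)` are groups, every
element of `⟨L⟩` is a word in `L⁻¹`, every element of `⟨R⟩` a word in `R`, and `1` has words of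
positive length on both sides. Padding with these and choosing `α` (each power of `(u₀, v₀)`
shifts the length difference by one) makes the two factors equally long.
-/

section

variable {G : Type*} [Group G]

theorem isWord_iff_mem_pow {S : Set G} {n : ℕ} {w : G} : IsWord S n w ↔ w ∈ S ^ n := by
  induction n generalizing w with
  | zero => simp [IsWord, eq_comm]
  | succ n ih =>
    simp_rw [pow_succ', Set.mem_mul, ← ih]
    constructor
    · rintro ⟨_ | ⟨a, l⟩, hl, hS, rfl⟩
      · simp at hl
      · exact ⟨a, hS a (by simp), l.prod, ⟨l, by simpa using hl, fun x hx => hS x (by simp [hx]),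
          rfl⟩, rfl⟩
    · rintro ⟨a, ha, _, ⟨l, rfl, hS, rfl⟩, rfl⟩
      exact ⟨a :: l, rfl, by simpa [ha] using hS, rfl⟩

theorem mem_wordSet_iff {S : Set G} {w : G} : w ∈ WordSet S ↔ ∃ n, 0 < n ∧ w ∈ S ^ n := by
  simp [WordSet, isWord_iff_mem_pow]

theorem wordSet_inv (S : Set G) : WordSet S⁻¹ = (WordSet S)⁻¹ := by
  ext w
  simp [mem_wordSet_iff, inv_pow]

theorem subset_wordSet (S : Set G) : S ⊆ WordSet S :=
  fun _ hx => mem_wordSet_iff.2 ⟨1, one_pos, by simpa using hx⟩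

theorem closure_subset_wordSet {S : Set G} (h : ∃ H : Subgroup G, WordSet S = H) :
    (Subgroup.closure S : Set G) ⊆ WordSet S := by
  obtain ⟨H, hH⟩ := h
  rw [hH]
  exact (Subgroup.closure_le H).2 (hH ▸ subset_wordSet S)

theorem closure_subset_wordSet_inv {S : Set G} (h : ∃ H : Subgroup G, WordSet S = H) :
    (Subgroup.closure S : Set G) ⊆ WordSet S⁻¹ := fun _ hx => by
  rw [wordSet_inv, Set.mem_inv]
  exact closure_subset_wordSet h (inv_mem hx)

theorem dPath_iff_exists_mem_pow {L R : Set G} {g h : G} :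
    DPath L R g h ↔ ∃ n, ∃ u ∈ L⁻¹ ^ n, ∃ v ∈ R ^ n, h = u * g * v := by
  constructor
  · intro hp
    induction hp with
    | refl => exact ⟨0, 1, rfl, 1, rfl, by simp⟩
    | tail _ harc ih =>
      obtain ⟨n, u, hu, v, hv, rfl⟩ := ih
      obtain ⟨l, hl, r, hr, rfl⟩ := harc
      refine ⟨n + 1, l⁻¹ * u, ?_, v * r, pow_succ R n ▸ Set.mul_mem_mul hv hr, by group⟩
      exact pow_succ' L⁻¹ n ▸ Set.mul_mem_mul (Set.inv_mem_inv.2 hl) hu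
  · rintro ⟨n, u, hu, v, hv, rfl⟩
    induction n generalizing g u v with
    | zero =>
      rw [pow_zero, Set.mem_one] at hu hv
      rw [hu, hv, one_mul, mul_one]
      exact ReflTransGen.refl
    | succ n ih =>
      rw [pow_succ] at hu
      rw [pow_succ'] at hv
      obtain ⟨u, hu, a, ha, rfl⟩ := hu
      obtain ⟨b, hb, v, hv, rfl⟩ := hv
      have harc : Arc L R g (a * g * b) := ⟨a⁻¹, ha, b, hb, by group⟩
      have hpath : DPath L R g (u * (a * g * b) * v) := .head harc (ih u hu v hv)
      simpa only [mul_assoc] using hpath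

theorem exists_add_mul_eq_of_eq_succ {i j k : ℕ} (hij : i = j + 1) (hk : 0 < k) (p q : ℕ) :
    ∃ α γ : ℕ, p + i * α = q + j * α + k * γ := by
  subst hij
  obtain ⟨k, rfl⟩ := Nat.exists_eq_add_of_lt hk
  rcases le_total p q with hpq | hqp
  · obtain ⟨d, rfl⟩ := Nat.exists_eq_add_of_le hpq
    exact ⟨d, 0, by ring⟩
  · obtain ⟨d, rfl⟩ := Nat.exists_eq_add_of_le hqp
    exact ⟨d * k, d, by ring⟩

theorem exists_add_mul_eq_add_mul {i j m k : ℕ} (hij : i = j + 1 ∨ j = i + 1) (hm : 0 < m)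
    (hk : 0 < k) (p q : ℕ) : ∃ α β γ : ℕ, p + i * α + m * β = q + j * α + k * γ := by
  rcases hij with hij | hji
  · obtain ⟨α, γ, h⟩ := exists_add_mul_eq_of_eq_succ hij hk p q
    exact ⟨α, 0, γ, by omega⟩
  · obtain ⟨α, β, h⟩ := exists_add_mul_eq_of_eq_succ hji hm q p
    exact ⟨α, β, 0, by omega⟩

theorem dPath_mul_mul {L R : Set G} (hL : (Subgroup.closure L : Set G) ⊆ WordSet L⁻¹)
    (hR : (Subgroup.closure R : Set G) ⊆ WordSet R) {i j : ℕ} (hij : i = j + 1 ∨ j = i + 1)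
    {u₀ v₀ : G} (hu₀ : u₀ ∈ L⁻¹ ^ i) (hv₀ : v₀ ∈ R ^ j) (huv₀ : u₀ * v₀ = 1) {x x' y y' : G}
    (hx : x ∈ Subgroup.closure L) (hx' : x' ∈ Subgroup.closure L)
    (hy : y ∈ Subgroup.closure R) (hy' : y' ∈ Subgroup.closure R) :
    DPath L R (x * y) (x' * y') := by
  obtain ⟨m, hm, h1L⟩ := mem_wordSet_iff.1 (hL (one_mem _))
  obtain ⟨k, hk, h1R⟩ := mem_wordSet_iff.1 (hR (one_mem _))
  obtain ⟨p₁, -, hx'L⟩ := mem_wordSet_iff.1 (hL hx')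
  obtain ⟨p₂, -, hxL⟩ := mem_wordSet_iff.1 (hL (inv_mem hx))
  obtain ⟨q₁, -, hyR⟩ := mem_wordSet_iff.1 (hR (inv_mem hy))
  obtain ⟨q₂, -, hy'R⟩ := mem_wordSet_iff.1 (hR hy')
  obtain ⟨α, β, γ, hlen⟩ := exists_add_mul_eq_add_mul hij hm hk (p₁ + p₂) (q₁ + q₂)
  have hu : x' * u₀ ^ α * x⁻¹ * 1 ^ β ∈ L⁻¹ ^ (p₁ + i * α + p₂ + m * β) := by
    simp only [pow_add, pow_mul]
    exact Set.mul_mem_mul (Set.mul_mem_mul (Set.mul_mem_mul hx'L (Set.pow_mem_pow hu₀)) hxL)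
      (Set.pow_mem_pow h1L)
  have hv : 1 ^ γ * y⁻¹ * v₀ ^ α * y' ∈ R ^ (p₁ + i * α + p₂ + m * β) := by
    rw [show p₁ + i * α + p₂ + m * β = k * γ + q₁ + j * α + q₂ by omega]
    simp only [pow_add, pow_mul]
    exact Set.mul_mem_mul (Set.mul_mem_mul (Set.mul_mem_mul (Set.pow_mem_pow h1R) hyR)
      (Set.pow_mem_pow hv₀)) hy'R
  refine dPath_iff_exists_mem_pow.2 ⟨_, _, hu, _, hv, ?_⟩
  rw [eq_inv_of_mul_eq_one_right huv₀, inv_pow]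
  group

end

theorem stmt_11_general {G : Type*} [Group G] (L R : Set G) (hR : R.Nonempty)
    (hWL : ∃ H : Subgroup G, WordSet L = (H : Set G))
    (hWR : ∃ H : Subgroup G, WordSet R = (H : Set G)) :
    (∀ g h : G, DPath L R g h) ↔
      ((Subgroup.closure L : Set G) * (Subgroup.closure R : Set G) = Set.univ ∧
       ∃ i j : ℕ, (i = j + 1 ∨ j = i + 1) ∧
         ∃ u v : G, IsWord L⁻¹ i u ∧ IsWord R j v ∧ u * v = 1) := by
  constructor
  · intro hconn
    refine ⟨Set.eq_univ_of_forall fun g => ?_, ?_⟩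
    · obtain ⟨n, u, hu, v, hv, rfl⟩ := dPath_iff_exists_mem_pow.1 (hconn 1 g)
      exact ⟨u, Subgroup.pow_subset (Subgroup.inv_subset_closure L) hu,
        v, Subgroup.pow_subset Subgroup.subset_closure hv, by group⟩
    · obtain ⟨r, hr⟩ := hR
      obtain ⟨n, u, hu, v, hv, h1⟩ := dPath_iff_exists_mem_pow.1 (hconn r 1)
      refine ⟨n, n + 1, Or.inr rfl, u, r * v, isWord_iff_mem_pow.2 hu,
        isWord_iff_mem_pow.2 (pow_succ' R n ▸ Set.mul_mem_mul hr hv), ?_⟩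
      rw [h1, mul_assoc]
  · rintro ⟨hprod, i, j, hij, u₀, v₀, hu₀, hv₀, huv₀⟩ g h
    obtain ⟨x, hx, y, hy, rfl⟩ : g ∈ (Subgroup.closure L : Set G) * Subgroup.closure R :=
      hprod ▸ Set.mem_univ g
    obtain ⟨x', hx', y', hy', rfl⟩ : h ∈ (Subgroup.closure L : Set G) * Subgroup.closure R :=
      hprod ▸ Set.mem_univ h
    exact dPath_mul_mul (closure_subset_wordSet_inv hWL) (closure_subset_wordSet hWR) hij
      (isWord_iff_mem_pow.1 hu₀) (isWord_iff_mem_pow.1 hv₀) huv₀ hx hx' hy hy'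

theorem stmt_11 {G : Type*} [Group G] (L R : Set G) (hL : L.Nonempty) (hR : R.Nonempty)
    (hWL : ∃ H : Subgroup G, WordSet L = (H : Set G))
    (hWR : ∃ H : Subgroup G, WordSet R = (H : Set G)) :
    (∀ g h : G, DPath L R g h) ↔
      ((Subgroup.closure L : Set G) * (Subgroup.closure R : Set G) = Set.univ ∧
       ∃ i j : ℕ, (i = j + 1 ∨ j = i + 1) ∧
         ∃ u v : G, IsWord L⁻¹ i u ∧ IsWord R j v ∧ u * v = 1) :=
  stmt_11_general L R hR hWL hWR
end
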